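/- arXiv:1812.04504 — 2 statements merged into one kernel-verified Lean document; each statement's English description precedes it below -/
import Mathlib

section
/- Let N be a positive natural number and V = Fin N → ℝ with weighted inner product ⟨f,g⟩ = w·Σ_i f i·g i (w > 0) and pointwise product *. Let Δh : V →ₗ[ℝ] V be symmetric and G = Δh∘Δh + 2a·Δh + α·id for reals a, α. Let Δt ∈ ℝ, M̄, q̄, φⁿ, φⁿ⁺¹, qⁿ, qⁿ⁺¹ ∈ V satisfy: μ = G((φⁿ+φⁿ⁺¹)/2) + (1/2)·((qⁿ+qⁿ⁺¹)/2)*q̄, φⁿ⁺¹ - φⁿ = -Δt·(M̄*μ), and qⁿ⁺¹ - qⁿ = q̄*(φⁿ⁺¹ - φⁿ). Then the discrete energy Fᵏ = (1/2)⟨φᵏ,Gφᵏ⟩ + (1/4)⟨qᵏ,qᵏ⟩ satisfies Fⁿ⁺¹ - Fⁿ = -Δt·⟨μ, M̄*μ⟩; in particular Fⁿ⁺¹ ≤ Fⁿ when Δt ≥ 0 and M̄ is pointwise nonnegative (energy dissipation law of the fully discrete EQ scheme for the Allen–Cahn model, Scheme 4.1). -/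
/-!
Both `φ` and the auxiliary variable `q` are discretized by the midpoint rule. For a symmetric
form `B` and a `B`-self-adjoint `T` one has `B x (T x) - B y (T y) = B (T (y + x)) (x - y)`, so
the energy increment is `⟨G φ^{n+1/2}, δφ⟩ + ½⟨q^{n+1/2}, δq⟩`. Since `δq = q̄ δφ` and
multiplication by `q̄` is self-adjoint, this is exactly `⟨μ, δφ⟩`, and the `φ`-update turns it
into `-Δt ⟨μ, M̄ μ⟩`, which is nonpositive when `Δt ≥ 0` and `M̄ ≥ 0`.
-/

open LinearMap

section Energy

variable {R M : Type*} [Field R] [AddCommGroup M] [Module R M]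

def quadratizedEnergy (B : LinearMap.BilinForm R M) (T : Module.End R M) (φ q : M) : R :=
  1 / 2 * B φ (T φ) + 1 / 4 * B q q

variable {B : LinearMap.BilinForm R M} {T S : Module.End R M}

theorem LinearMap.BilinForm.IsSymm.apply_apply_sub_apply_apply (hB : B.IsSymm)
    (hT : B.IsSelfAdjoint T) (x y : M) : B x (T x) - B y (T y) = B (T (y + x)) (x - y) := by
  have hxy : B (T y) x = B (T x) y := by rw [hT, hB.eq]
  rw [map_add T, map_add B, LinearMap.add_apply, map_sub, map_sub, hB.eq (T x) x,
    hB.eq (T y) y, hxy]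
  ring

theorem LinearMap.BilinForm.IsSymm.quadratizedEnergy_sub_quadratizedEnergy (hB : B.IsSymm)
    (hT : B.IsSelfAdjoint T) (hS : B.IsSelfAdjoint S) {φ₀ φ₁ q₀ q₁ μ : M}
    (hq : q₁ - q₀ = S (φ₁ - φ₀))
    (hμ : μ = T ((1 / 2 : R) • (φ₀ + φ₁)) + (1 / 2 : R) • S ((1 / 2 : R) • (q₀ + q₁))) :
    quadratizedEnergy B T φ₁ q₁ - quadratizedEnergy B T φ₀ q₀ = B μ (φ₁ - φ₀) := by
  have hφ := hB.apply_apply_sub_apply_apply hT φ₁ φ₀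
  have hq' : B q₁ q₁ - B q₀ q₀ = B (q₀ + q₁) (S (φ₁ - φ₀)) := by
    simpa only [Module.End.one_apply, hq] using
      hB.apply_apply_sub_apply_apply isAdjointPair_one q₁ q₀
  have hμ' : B μ (φ₁ - φ₀) =
      1 / 2 * B (T (φ₀ + φ₁)) (φ₁ - φ₀) + 1 / 4 * B (q₀ + q₁) (S (φ₁ - φ₀)) := by
    rw [← hS, hμ, show (1 / 4 : R) = 1 / 2 * (1 / 2) by rw [one_div_mul_one_div]; norm_num]
    simp only [map_add, map_smul, LinearMap.add_apply, LinearMap.smul_apply, smul_eq_mul]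
    ring
  rw [quadratizedEnergy, quadratizedEnergy, hμ']
  linear_combination (1 / 2 : R) * hφ + (1 / 4 : R) * hq'

end Energy

theorem LinearMap.IsAdjointPair.smul_form {R M M₁ M₂ : Type*} [CommSemiring R]
    [AddCommMonoid M] [Module R M] [AddCommMonoid M₁] [Module R M₁] [AddCommMonoid M₂]
    [Module R M₂] {B : M →ₗ[R] M →ₗ[R] M₂} {B' : M₁ →ₗ[R] M₁ →ₗ[R] M₂} {f : M → M₁}
    {g : M₁ → M} (h : IsAdjointPair B B' f g) (c : R) : IsAdjointPair (c • B) (c • B') f g :=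
  fun x y => by simp only [smul_apply, h x y]

section DotProduct

variable {ι R : Type*} [Fintype ι] [CommSemiring R]

theorem dotProductBilin_isSymm :
    LinearMap.BilinForm.IsSymm (dotProductBilin R R : LinearMap.BilinForm R (ι → R)) :=
  ⟨fun x y => dotProduct_comm x y⟩

theorem dotProductBilin_isSelfAdjoint_mulLeft (c : ι → R) :
    (dotProductBilin R R : LinearMap.BilinForm R (ι → R)).IsSelfAdjoint (mulLeft R c) :=
      fun x y => by
  simp only [dotProductBilin_apply_apply, mulLeft_apply, dotProduct, Pi.mul_apply]
  exact Finset.sum_congr rfl fun i _ => by ring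

theorem dotProduct_mul_nonneg {S : Type*} [CommRing S] [LinearOrder S] [IsStrictOrderedRing S]
    {c : ι → S} (hc : ∀ i, 0 ≤ c i) (x : ι → S) : 0 ≤ x ⬝ᵥ (c * x) :=
  Finset.sum_nonneg fun i _ => by
    simpa only [Pi.mul_apply, mul_left_comm] using mul_nonneg (hc i) (mul_self_nonneg (x i))

end DotProduct

theorem discrete_energy_dissipation_AC_EQ_general
    (N : ℕ) (w : ℝ) (hw : 0 < w)
    (ip : (Fin N → ℝ) → (Fin N → ℝ) → ℝ)
    (hip : ∀ f g, ip f g = w * ∑ i, f i * g i)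
    (Δh : (Fin N → ℝ) →ₗ[ℝ] (Fin N → ℝ))
    (hsym : ∀ f g, ip (Δh f) g = ip f (Δh g))
    (a α : ℝ) (G : (Fin N → ℝ) → (Fin N → ℝ))
    (hG : ∀ f, G f = Δh (Δh f) + (2 * a) • Δh f + α • f)
    (Δt : ℝ) (Mbar qbar phin phin1 qn qn1 mu : Fin N → ℝ)
    (hmu : mu = G ((1 / 2 : ℝ) • (phin + phin1)) +
      (1 / 2 : ℝ) • (((1 / 2 : ℝ) • (qn + qn1)) * qbar))
    (hphi : phin1 - phin = (-Δt) • (Mbar * mu))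
    (hq : qn1 - qn = qbar * (phin1 - phin))
    (Fn Fn1 : ℝ)
    (hFn : Fn = (1 / 2) * ip phin (G phin) + (1 / 4) * ip qn qn)
    (hFn1 : Fn1 = (1 / 2) * ip phin1 (G phin1) + (1 / 4) * ip qn1 qn1) :
    Fn1 - Fn = -Δt * ip mu (Mbar * mu) ∧
    (0 ≤ Δt → (∀ i, 0 ≤ Mbar i) → Fn1 ≤ Fn) := by
  set B : LinearMap.BilinForm ℝ (Fin N → ℝ) := w • dotProductBilin ℝ ℝ
  obtain rfl : ip = fun f g => B f g := funext₂ hip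
  set Gₗ : Module.End ℝ (Fin N → ℝ) := Δh * Δh + (2 * a) • Δh + α • 1
  obtain rfl : G = Gₗ := funext hG
  have hB : B.IsSymm := dotProductBilin_isSymm.smul w
  have hΔh : B.IsSelfAdjoint Δh := hsym
  have hGₗ : B.IsSelfAdjoint Gₗ :=
    ((hΔh.mul hΔh).add (hΔh.smul _)).add (isAdjointPair_one.smul α)
  have hmul : B.IsSelfAdjoint (mulLeft ℝ qbar) :=
    (dotProductBilin_isSelfAdjoint_mulLeft qbar).smul_form w
  have hE : Fn1 - Fn = B mu (phin1 - phin) := by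
    rw [hFn, hFn1]
    exact hB.quadratizedEnergy_sub_quadratizedEnergy hGₗ hmul hq
      (by rw [hmu, mulLeft_apply, mul_comm])
  have hdiss : Fn1 - Fn = -Δt * B mu (Mbar * mu) := by
    rw [hE, hphi, map_smul, smul_eq_mul]
  refine ⟨hdiss, fun hΔt hM => ?_⟩
  have hpos : 0 ≤ B mu (Mbar * mu) := mul_nonneg hw.le (dotProduct_mul_nonneg hM mu)
  nlinarith

/-- Energy dissipation law of the fully discrete EQ scheme for the
Allen–Cahn model (Scheme 4.1). -/
theorem discrete_energy_dissipation_AC_EQ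
    (N : ℕ) (hN : 0 < N) (w : ℝ) (hw : 0 < w)
    (ip : (Fin N → ℝ) → (Fin N → ℝ) → ℝ)
    (hip : ∀ f g, ip f g = w * ∑ i, f i * g i)
    (Δh : (Fin N → ℝ) →ₗ[ℝ] (Fin N → ℝ))
    (hsym : ∀ f g, ip (Δh f) g = ip f (Δh g))
    (a α : ℝ) (G : (Fin N → ℝ) → (Fin N → ℝ))
    (hG : ∀ f, G f = Δh (Δh f) + (2 * a) • Δh f + α • f)
    (Δt : ℝ) (Mbar qbar phin phin1 qn qn1 mu : Fin N → ℝ)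
    (hmu : mu = G ((1 / 2 : ℝ) • (phin + phin1)) +
      (1 / 2 : ℝ) • (((1 / 2 : ℝ) • (qn + qn1)) * qbar))
    (hphi : phin1 - phin = (-Δt) • (Mbar * mu))
    (hq : qn1 - qn = qbar * (phin1 - phin))
    (Fn Fn1 : ℝ)
    (hFn : Fn = (1 / 2) * ip phin (G phin) + (1 / 4) * ip qn qn)
    (hFn1 : Fn1 = (1 / 2) * ip phin1 (G phin1) + (1 / 4) * ip qn1 qn1) :
    Fn1 - Fn = -Δt * ip mu (Mbar * mu) ∧
    (0 ≤ Δt → (∀ i, 0 ≤ Mbar i) → Fn1 ≤ Fn) :=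
  discrete_energy_dissipation_AC_EQ_general N w hw ip hip Δh hsym a α G hG Δt Mbar qbar phin phin1
    qn qn1 mu hmu hphi hq Fn Fn1 hFn hFn1
end

section
/- Let N be a positive natural number and V = Fin N → ℝ with weighted inner product ⟨f,g⟩ = w·Σ_i f i·g i (w > 0), pointwise product *, and constant-one function 𝟙. Let Δh : V →ₗ[ℝ] V be symmetric and G = Δh∘Δh + 2a·Δh + α·id for reals a, α. Let Δt, C₀, rⁿ, rⁿ⁺¹ ∈ ℝ and M̄, ḡ, φⁿ, φⁿ⁺¹ ∈ V with ⟨M̄,𝟙⟩ ≠ 0 satisfy: μ = G((φⁿ+φⁿ⁺¹)/2) + (rⁿ + rⁿ⁺¹)·ḡ, L = ⟨M̄,μ⟩/⟨M̄,𝟙⟩, φⁿ⁺¹ - φⁿ = -Δt·(M̄*(μ - L·𝟙)), and rⁿ⁺¹ - rⁿ = ⟨ḡ, φⁿ⁺¹ - φⁿ⟩. Then the discrete energy Fᵏ = (1/2)⟨φᵏ,Gφᵏ⟩ + (rᵏ)² - C₀ satisfies Fⁿ⁺¹ - Fⁿ = -Δt·⟨μ - L·𝟙, M̄*(μ - L·𝟙)⟩;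 in particular Fⁿ⁺¹ ≤ Fⁿ when Δt ≥ 0 and M̄ is pointwise nonnegative (energy dissipation law of the fully discrete SAV scheme for the Allen–Cahn model with a Lagrange multiplier, Scheme 4.8). -/
/-!
Testing the scheme against `φⁿ⁺¹ - φⁿ` gives the discrete chain rule: since `G` is self-adjoint,
`⟨G((φⁿ + φⁿ⁺¹)/2), φⁿ⁺¹ - φⁿ⟩` telescopes to the change of `½⟨φ, Gφ⟩`, and the SAV update
makes `(rⁿ + rⁿ⁺¹)⟨ḡ, φⁿ⁺¹ - φⁿ⟩ = (rⁿ⁺¹)² - (rⁿ)²`. Hence `Fⁿ⁺¹ - Fⁿ = ⟨μ, φⁿ⁺¹ - φⁿ⟩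
= -Δt⟨μ, M̄(μ - L)⟩`, and the multiplier `L` is exactly the constant that makes `μ - L` orthogonal
to `M̄`, so `μ` may be replaced by `μ - L` in the first slot.
-/

open Matrix Polynomial

namespace LinearMap.BilinForm

section

variable {R V : Type*} [CommRing R] [AddCommGroup V] [Module R V] {B : LinearMap.BilinForm R V}

theorem isSelfAdjoint_aeval {T : Module.End R V} (hT : B.IsSelfAdjoint T) (p : R[X]) :
    B.IsSelfAdjoint (aeval T p) := by
  induction p using Polynomial.induction_on' with
  | add p q hp hq => rw [map_add]; exact hp.add hq
  | monomial n c =>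
    rw [aeval_monomial, ← Algebra.smul_def]
    refine IsAdjointPair.smul c ?_
    induction n with
    | zero => exact isAdjointPair_one
    | succ n ih => simpa only [pow_succ, (Commute.self_pow T n).eq] using ih.mul hT

theorem apply_smul_add_sub_eq (hB : B.IsSymm) {G : V →ₗ[R] V} (hG : B.IsSelfAdjoint G)
    (c : R) (x y : V) :
    B (G (c • (x + y))) (y - x) = c * (B y (G y) - B x (G x)) := by
  have hcross : B (G x) y = B (G y) x := by rw [hG, hB.eq]
  simp only [map_smul, map_add, map_sub, LinearMap.smul_apply, LinearMap.add_apply, smul_eq_mul]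
  rw [hG y y, hG x x, hcross]
  ring

end

section Field

variable {K V : Type*} [Field K] [AddCommGroup V] [Module K V] {B : LinearMap.BilinForm K V}

theorem apply_sub_div_smul_eq_zero {m u : V} (hmu : B m u ≠ 0) (f : V) :
    B m (f - (B m f / B m u) • u) = 0 := by
  rw [map_sub, map_smul, smul_eq_mul, div_mul_cancel₀ _ hmu, sub_self]

theorem sav_energy_sub_eq (hB : B.IsSymm) {G : V →ₗ[K] V} (hG : B.IsSelfAdjoint G)
    {x y g μ : V} {r s : K}
    (hμ : μ = G ((1 / 2 : K) • (x + y)) + (r + s) • g) (hrs : s - r = B g (y - x)) :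
    (1 / 2 * B y (G y) + s ^ 2) - (1 / 2 * B x (G x) + r ^ 2) = B μ (y - x) := by
  rw [hμ, map_add, LinearMap.add_apply, apply_smul_add_sub_eq hB hG, map_smul,
    LinearMap.smul_apply, smul_eq_mul, ← hrs]
  ring

end Field

end LinearMap.BilinForm

section WeightedDot

variable {ι : Type*} [Fintype ι]

def weightedDot {R : Type*} [CommSemiring R] (w : R) : LinearMap.BilinForm R (ι → R) :=
  w • dotProductBilin R R

variable {R : Type*} [CommRing R]

@[simp]
theorem weightedDot_apply (w : R) (f g : ι → R) : weightedDot w f g = w * (f ⬝ᵥ g) := rfl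

theorem weightedDot_isSymm (w : R) : (weightedDot w : LinearMap.BilinForm R (ι → R)).IsSymm :=
  ⟨fun f g ↦ by rw [weightedDot_apply, weightedDot_apply, dotProduct_comm]⟩

theorem weightedDot_apply_mul (w : R) (f m g : ι → R) :
    weightedDot w f (m * g) = weightedDot w (f * m) g := by
  simp only [weightedDot_apply, dotProduct, Pi.mul_apply, mul_assoc]

theorem weightedDot_apply_mul_self_nonneg [LinearOrder R] [IsStrictOrderedRing R] {w : R}
    (hw : 0 ≤ w) {m : ι → R} (hm : ∀ i, 0 ≤ m i) (f : ι → R) :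
    0 ≤ weightedDot w f (m * f) := by
  rw [weightedDot_apply_mul, weightedDot_apply]
  refine mul_nonneg hw (Finset.sum_nonneg fun i _ ↦ ?_)
  simpa only [Pi.mul_apply, mul_comm (f i), mul_assoc] using
    mul_nonneg (hm i) (mul_self_nonneg (f i))

theorem weightedDot_sub_smul_one_mul {K : Type*} [Field K] {w L : K} {m : ι → K}
    (hm : weightedDot w m 1 ≠ 0) {μ : ι → K} (hL : L = weightedDot w m μ / weightedDot w m 1) :
    weightedDot w (μ - L • 1) (m * (μ - L • 1)) = weightedDot w μ (m * (μ - L • 1)) := by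
  have hmean : weightedDot w m (μ - L • 1) = 0 :=
    hL ▸ LinearMap.BilinForm.apply_sub_div_smul_eq_zero hm μ
  rw [map_sub, map_smul, LinearMap.sub_apply, LinearMap.smul_apply, weightedDot_apply_mul w 1,
    one_mul, hmean, smul_zero, sub_zero]

end WeightedDot

theorem discrete_energy_dissipation_AC_Lagrange_SAV_general
    (N : ℕ) (w : ℝ) (hw : 0 < w)
    (ip : (Fin N → ℝ) → (Fin N → ℝ) → ℝ)
    (hip : ∀ f g, ip f g = w * ∑ i, f i * g i)
    (one : Fin N → ℝ) (hone : one = fun _ => 1)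
    (Δh : (Fin N → ℝ) →ₗ[ℝ] (Fin N → ℝ))
    (hsym : ∀ f g, ip (Δh f) g = ip f (Δh g))
    (a α : ℝ) (G : (Fin N → ℝ) → (Fin N → ℝ))
    (hG : ∀ f, G f = Δh (Δh f) + (2 * a) • Δh f + α • f)
    (Δt C₀ rn rn1 : ℝ) (Mbar gbar phin phin1 mu : Fin N → ℝ)
    (hM : ip Mbar one ≠ 0)
    (hmu : mu = G ((1 / 2 : ℝ) • (phin + phin1)) + (rn + rn1) • gbar)
    (L : ℝ) (hL : L = ip Mbar mu / ip Mbar one)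
    (hphi : phin1 - phin = (-Δt) • (Mbar * (mu - L • one)))
    (hr : rn1 - rn = ip gbar (phin1 - phin))
    (Fn Fn1 : ℝ)
    (hFn : Fn = (1 / 2) * ip phin (G phin) + rn ^ 2 - C₀)
    (hFn1 : Fn1 = (1 / 2) * ip phin1 (G phin1) + rn1 ^ 2 - C₀) :
    Fn1 - Fn = -Δt * ip (mu - L • one) (Mbar * (mu - L • one)) ∧
    (0 ≤ Δt → (∀ i, 0 ≤ Mbar i) → Fn1 ≤ Fn) := by
  obtain rfl : ip = fun f g ↦ weightedDot w f g := funext₂ hip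
  obtain rfl : one = 1 := hone
  beta_reduce at hsym hM hL hr hFn hFn1 ⊢
  obtain rfl : G = ⇑(aeval Δh (X ^ 2 + C (2 * a) * X + C α)) := by
    funext f
    simp only [hG, pow_two, map_add, map_mul, aeval_X, aeval_C, LinearMap.add_apply,
      Module.End.mul_apply, Module.algebraMap_end_apply]
    module
  have hGsa := LinearMap.BilinForm.isSelfAdjoint_aeval hsym (X ^ 2 + C (2 * a) * X + C α)
  have hchange : Fn1 - Fn = weightedDot w mu (phin1 - phin) := by
    rw [hFn, hFn1, ← LinearMap.BilinForm.sav_energy_sub_eq (weightedDot_isSymm w) hGsa hmu hr]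
    ring
  have hdiss : Fn1 - Fn = -Δt * weightedDot w (mu - L • 1) (Mbar * (mu - L • 1)) := by
    rw [hchange, hphi, map_smul, smul_eq_mul, weightedDot_sub_smul_one_mul hM hL]
  refine ⟨hdiss, fun hΔt hMbar ↦ ?_⟩
  rw [← sub_nonpos, hdiss, neg_mul]
  exact neg_nonpos.mpr (mul_nonneg hΔt (weightedDot_apply_mul_self_nonneg hw.le hMbar _))

/-- Energy dissipation law of the fully discrete SAV scheme for the Allen–Cahn
model with a Lagrange multiplier (Scheme 4.8). -/
theorem discrete_energy_dissipation_AC_Lagrange_SAV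
    (N : ℕ) (hN : 0 < N) (w : ℝ) (hw : 0 < w)
    (ip : (Fin N → ℝ) → (Fin N → ℝ) → ℝ)
    (hip : ∀ f g, ip f g = w * ∑ i, f i * g i)
    (one : Fin N → ℝ) (hone : one = fun _ => 1)
    (Δh : (Fin N → ℝ) →ₗ[ℝ] (Fin N → ℝ))
    (hsym : ∀ f g, ip (Δh f) g = ip f (Δh g))
    (a α : ℝ) (G : (Fin N → ℝ) → (Fin N → ℝ))
    (hG : ∀ f, G f = Δh (Δh f) + (2 * a) • Δh f + α • f)
    (Δt C₀ rn rn1 : ℝ) (Mbar gbar phin phin1 mu : Fin N → ℝ)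
    (hM : ip Mbar one ≠ 0)
    (hmu : mu = G ((1 / 2 : ℝ) • (phin + phin1)) + (rn + rn1) • gbar)
    (L : ℝ) (hL : L = ip Mbar mu / ip Mbar one)
    (hphi : phin1 - phin = (-Δt) • (Mbar * (mu - L • one)))
    (hr : rn1 - rn = ip gbar (phin1 - phin))
    (Fn Fn1 : ℝ)
    (hFn : Fn = (1 / 2) * ip phin (G phin) + rn ^ 2 - C₀)
    (hFn1 : Fn1 = (1 / 2) * ip phin1 (G phin1) + rn1 ^ 2 - C₀) :
    Fn1 - Fn = -Δt * ip (mu - L • one) (Mbar * (mu - L • one)) ∧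
    (0 ≤ Δt → (∀ i, 0 ≤ Mbar i) → Fn1 ≤ Fn) :=
  discrete_energy_dissipation_AC_Lagrange_SAV_general N w hw ip hip one hone Δh hsym a α G hG Δt C₀
    rn rn1 Mbar gbar phin phin1 mu hM hmu L hL hphi hr Fn Fn1 hFn hFn1
end
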